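/- A Hermiticity-preserving map Φ : B(K) → B(H) is k-positive if and only if Ad_E∘Φ∘Ad_F is completely positive for every rank-k projection E on H and every rank-k projection F on K. -/

import Mathlib

open Matrix BigOperators ComplexOrder
open scoped Kronecker ComplexConjugate

/-- Square complex matrices of size `d`, modeling `B(ℂ^d)`. -/
abbrev MatC (d : ℕ) := Matrix (Fin d) (Fin d) ℂ

/-- Hilbert–Schmidt (trace) inner product `⟨A, B⟩ = Tr (A B*)`. -/
noncomputable def hsInner {ι : Type*} [Fintype ι] (A B : Matrix ι ι ℂ) : ℂ :=
  (A * Bᴴ).trace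

/-- Inner product of linear maps: `⟨Φ, Ψ⟩ = Σ_{k,l} ⟨Φ f_{kl}, Ψ f_{kl}⟩`. -/
noncomputable def mapInner {a b : ℕ} (Φ Ψ : MatC a →ₗ[ℂ] MatC b) : ℂ :=
  ∑ k : Fin a, ∑ l : Fin a,
    hsInner (Φ (Matrix.single k l 1)) (Ψ (Matrix.single k l 1))

/-- The adjoint map `Φ*` w.r.t. the trace inner products, satisfying
`⟨A, Φ B⟩ = ⟨Φ* A, B⟩`. -/
noncomputable def adjointMap {a b : ℕ} (Φ : MatC a →ₗ[ℂ] MatC b) : MatC b →ₗ[ℂ] MatC a where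
  toFun A := Matrix.of fun k l => hsInner A (Φ (Matrix.single k l 1))
  map_add' := by
    intro A B; ext k l
    simp [hsInner, Matrix.add_mul]
  map_smul' := by
    intro c A; ext k l
    simp [hsInner, Matrix.smul_mul]

/-- The conjugation map `Ad_V : ρ ↦ V ρ V*`. -/
noncomputable def adMap {a b : ℕ} (V : Matrix (Fin b) (Fin a) ℂ) : MatC a →ₗ[ℂ] MatC b where
  toFun ρ := V * ρ * Vᴴ
  map_add' := by intro ρ σ; simp [Matrix.mul_add, Matrix.add_mul]
  map_smul' := by intro c ρ; simp [Matrix.mul_smul, Matrix.smul_mul]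

/-- The map `Φ ⊗ id_k` acting on `Matrix (Fin a × Fin k)`. -/
noncomputable def tensId {a b : ℕ} (Φ : MatC a →ₗ[ℂ] MatC b) (k : ℕ)
    (X : Matrix (Fin a × Fin k) (Fin a × Fin k) ℂ) :
    Matrix (Fin b × Fin k) (Fin b × Fin k) ℂ :=
  Matrix.of fun p q => Φ (Matrix.of fun i j => X (i, p.2) (j, q.2)) p.1 q.1

/-- `Φ` is `k`-positive if `Φ ⊗ id_k` preserves positive semidefiniteness. -/
def IsKPositive {a b : ℕ} (Φ : MatC a →ₗ[ℂ] MatC b) (k : ℕ) : Prop :=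
  ∀ X : Matrix (Fin a × Fin k) (Fin a × Fin k) ℂ, X.PosSemidef → (tensId Φ k X).PosSemidef

/-- `Φ` is completely positive if it is `k`-positive for all `k`. -/
def IsCompletelyPositive {a b : ℕ} (Φ : MatC a →ₗ[ℂ] MatC b) : Prop :=
  ∀ k : ℕ, IsKPositive Φ k

/-- Positive map: maps PSD matrices to PSD matrices. -/
def IsPosMap {a b : ℕ} (Φ : MatC a →ₗ[ℂ] MatC b) : Prop :=
  ∀ X : MatC a, X.PosSemidef → (Φ X).PosSemidef

/-- Hermiticity-preserving map. -/
def HermPreserving {a b : ℕ} (Φ : MatC a →ₗ[ℂ] MatC b) : Prop :=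
  ∀ X, Φ Xᴴ = (Φ X)ᴴ

/-- Choi–Jamiołkowski matrix `J(Φ) = Σ_{k,l} f_{kl} ⊗ Φ(f_{kl})`. -/
noncomputable def choi {a b : ℕ} (Φ : MatC a →ₗ[ℂ] MatC b) :
    Matrix (Fin a × Fin b) (Fin a × Fin b) ℂ :=
  ∑ k : Fin a, ∑ l : Fin a,
    (Matrix.single k l (1 : ℂ)) ⊗ₖ (Φ (Matrix.single k l 1))

noncomputable instance instTopMaps {a b : ℕ} : TopologicalSpace (MatC a →ₗ[ℂ] MatC b) :=
  TopologicalSpace.induced (fun Φ => (Φ : MatC a → MatC b)) inferInstance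

/-- A cone with a mapping cone symmetry (mcs-cone): a nonzero closed convex cone of
positive maps, stable under two-sided composition with completely positive maps. -/
def IsMcsCone {a b : ℕ} (C : Set (MatC a →ₗ[ℂ] MatC b)) : Prop :=
  (∃ Φ ∈ C, Φ ≠ 0) ∧ IsClosed C ∧
  (∀ Φ ∈ C, ∀ Ψ ∈ C, Φ + Ψ ∈ C) ∧
  (∀ Φ ∈ C, ∀ c : ℝ, 0 ≤ c → (c : ℂ) • Φ ∈ C) ∧
  (∀ Φ ∈ C, IsPosMap Φ) ∧
  (∀ Φ ∈ C, ∀ Υ : MatC b →ₗ[ℂ] MatC b, IsCompletelyPositive Υ →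
    ∀ Ω : MatC a →ₗ[ℂ] MatC a, IsCompletelyPositive Ω → Υ ∘ₗ Φ ∘ₗ Ω ∈ C)

/-- Dual cone inside Hermiticity-preserving maps. -/
def dualCone {a b : ℕ} (C : Set (MatC a →ₗ[ℂ] MatC b)) : Set (MatC a →ₗ[ℂ] MatC b) :=
  {Ψ | HermPreserving Ψ ∧ ∀ Φ ∈ C, 0 ≤ mapInner Ψ Φ}

/-!
Identify `y ∈ ℂ^a ⊗ ℂ^j` with the `j × a` matrix `Y` such that `vec Y = y`; the rank of `Y` is the
Schmidt rank of `y`. Positive semidefinite matrices are sums of rank-one matrices `y yᴴ`, and a `y`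
of Schmidt rank at most `k` is `(1 ⊗ V) u` with `u ∈ ℂ^a ⊗ ℂ^k`. As `Φ ⊗ id` commutes with
conjugation by `1 ⊗ V`, a `k`-positive `Φ` makes `(Φ ⊗ id_j)(y yᴴ)` positive for all such `y` and
all `j`. Since `(F ⊗ 1) y` has Schmidt rank at most `rank F`, this makes `Ad_E ∘ Φ ∘ Ad_F`
completely positive whenever `rank F = k`.

Conversely, given `x ∈ ℂ^n ⊗ ℂ^k` and `y ∈ ℂ^m ⊗ ℂ^k` there are rank-`k` projections `E`, `F` with
`(E ⊗ 1) x = x` and `(F ⊗ 1) y = y`, so the quadratic form of `(Φ ⊗ id_k)(y yᴴ)` at `x` equals that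
of `(Ad_E ∘ Φ ∘ Ad_F ⊗ id_k)(y yᴴ)` and is nonnegative; over `ℂ` this already makes
`(Φ ⊗ id_k)(y yᴴ)` positive semidefinite.
-/

section LinearAlgebra

open Module

theorem Submodule.exists_le_finrank_eq {K V : Type*} [DivisionRing K] [AddCommGroup V]
    [Module K V] [FiniteDimensional K V] (S : Submodule K V) {k : ℕ}
    (hS : finrank K S ≤ k) (hk : k ≤ finrank K V) :
    ∃ T : Submodule K V, S ≤ T ∧ finrank K T = k := by
  induction k with
  | zero => exact ⟨S, le_rfl, Nat.le_zero.mp hS⟩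
  | succ k ih =>
    rcases hS.eq_or_lt with hS | hS
    · exact ⟨S, le_rfl, hS⟩
    obtain ⟨T, hST, hT⟩ := ih (Nat.lt_succ_iff.mp hS) (Nat.le_of_succ_le hk)
    obtain ⟨v, -, hv⟩ : ∃ v ∈ (⊤ : Submodule K V), v ∉ T := SetLike.exists_of_lt <|
      lt_top_iff_ne_top.mpr fun h => by
        rw [h, finrank_top] at hT
        omega
    exact ⟨T ⊔ span K {v}, hST.trans le_sup_left, by rw [finrank_sup_span_singleton hv, hT]⟩

theorem Matrix.exists_mul_eq_of_rank_le {K m n : Type*} [Field K] [Fintype m] [Fintype n]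
    (A : Matrix m n K) {k : ℕ} (hA : A.rank ≤ k) :
    ∃ (U : Matrix m (Fin k) K) (N : Matrix (Fin k) n K), U * N = A := by
  obtain ⟨f, -, hf, -⟩ := Submodule.exists_fun_fin_finrank_span_eq K (Set.range A.col)
  have hd : finrank K (Submodule.span K (Set.range A.col)) ≤ k :=
    A.rank_eq_finrank_span_cols ▸ hA
  set g : Fin k → m → K := Function.extend (Fin.castLE hd) f 0
  have hfg : Set.range f ⊆ Set.range g := by
    rintro _ ⟨i, rfl⟩
    exact ⟨Fin.castLE hd i, (Fin.castLE_injective hd).extend_apply f 0 i⟩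
  have hcol (j : n) : A.col j ∈ Submodule.span K (Set.range g) :=
    Submodule.span_mono hfg (hf.ge (Submodule.subset_span (Set.mem_range_self j)))
  choose c hc using fun j => (Submodule.mem_span_range_iff_exists_fun K).mp (hcol j)
  refine ⟨of fun i t => g t i, of fun t j => c j t, ?_⟩
  ext i j
  simpa [mul_apply, mul_comm] using congrFun (hc j) i

theorem Matrix.exists_isHermitian_idempotent_rank_eq_mul_eq {𝕜 n ι : Type*} [RCLike 𝕜]
    [Fintype n] [DecidableEq n] [Fintype ι] (X : Matrix n ι 𝕜) {k : ℕ} (hX : X.rank ≤ k)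
    (hk : k ≤ Fintype.card n) :
    ∃ F : Matrix n n 𝕜, F.IsHermitian ∧ F * F = F ∧ F.rank = k ∧ F * X = X := by
  classical
  set S := LinearMap.range (toEuclideanLin X)
  have hS : finrank 𝕜 S = X.rank :=
    (rank_eq_finrank_range_toLin X (PiLp.basisFun 2 𝕜 n) (PiLp.basisFun 2 𝕜 ι)).symm
  obtain ⟨T, hST, hT⟩ := S.exists_le_finrank_eq (hS ▸ hX) (by rwa [finrank_euclideanSpace])
  let e := (toEuclideanCLM (n := n) (𝕜 := 𝕜)).symm
  set F := e T.starProjection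
  have hF : toEuclideanCLM (n := n) (𝕜 := 𝕜) F = T.starProjection :=
    StarAlgEquiv.apply_symm_apply _ _
  have hself : IsSelfAdjoint F := (isSelfAdjoint_starProjection T).map e.toStarAlgHom
  refine ⟨F, isHermitian_iff_isSelfAdjoint.mpr hself,
    (T.isIdempotentElem_starProjection.map e).eq, ?_, ?_⟩
  · rw [rank_eq_finrank_range_toLin F (PiLp.basisFun 2 𝕜 n) (PiLp.basisFun 2 𝕜 n), ← hT,
      ← T.range_starProjection, ← hF]
    rfl
  · refine toLin'.injective (LinearMap.ext fun v => ?_)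
    have hv : WithLp.toLp 2 (X *ᵥ v) ∈ T := hST ⟨WithLp.toLp 2 v, rfl⟩
    have hFv := congrArg WithLp.ofLp (Submodule.starProjection_eq_self_iff.mpr hv)
    rw [← hF] at hFv
    simpa [toLin'_mul] using hFv

theorem Matrix.posSemidef_of_forall_dotProduct_mulVec_nonneg {n : Type*} [Fintype n]
    {M : Matrix n n ℂ} (hM : ∀ x, 0 ≤ star x ⬝ᵥ (M *ᵥ x)) : M.PosSemidef := by
  classical
  rw [← isPositive_toEuclideanLin_iff, LinearMap.isPositive_iff_complex]
  intro x
  obtain ⟨hre, him⟩ := Complex.nonneg_iff.mp (hM x.ofLp)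
  rw [← inner_conj_symm, EuclideanSpace.inner_eq_star_dotProduct, dotProduct_comm]
  simpa [Complex.ext_iff] using ⟨him.symm, hre⟩

theorem Matrix.mul_vecMulVec_mul_conjTranspose {m n R : Type*} [Fintype n] [CommSemiring R]
    [StarRing R] (A : Matrix m n R) (x : n → R) :
    A * vecMulVec x (star x) * Aᴴ = vecMulVec (A *ᵥ x) (star (A *ᵥ x)) := by
  rw [mul_vecMulVec, vecMulVec_mul, star_mulVec]

theorem Matrix.star_dotProduct_mul_mul_conjTranspose_mulVec {m n R : Type*} [Fintype m]
    [Fintype n] [CommSemiring R] [StarRing R] (A : Matrix m n R) (T : Matrix n n R)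
    (x : m → R) :
    star x ⬝ᵥ (A * T * Aᴴ) *ᵥ x = star (Aᴴ *ᵥ x) ⬝ᵥ T *ᵥ (Aᴴ *ᵥ x) := by
  rw [star_mulVec, conjTranspose_conjTranspose, ← mulVec_mulVec, ← mulVec_mulVec,
    dotProduct_mulVec]

theorem Matrix.kronecker_one_mulVec_vec {l m n R : Type*} [Fintype m] [Fintype n]
    [DecidableEq n] [CommSemiring R] (F : Matrix l m R) (Y : Matrix n m R) :
    (F ⊗ₖ (1 : Matrix n n R)) *ᵥ vec Y = vec (Y * Fᵀ) := by
  simpa using kronecker_mulVec_vec (1 : Matrix n n R) Y F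

end LinearAlgebra

section Blocks

variable {α β κ ι ν R : Type*}

def blockAt (M : Matrix (α × κ) (β × κ) R) (s t : κ) : Matrix α β R :=
  of fun i i' => M (i, s) (i', t)

theorem blockAt_sum [AddCommMonoid R] (u : Finset ι) (M : ι → Matrix (α × κ) (β × κ) R)
    (s t : κ) : blockAt (∑ i ∈ u, M i) s t = ∑ i ∈ u, blockAt (M i) s t := by
  ext
  simp [blockAt, Matrix.sum_apply]

theorem blockAt_kronecker_one_mul_mul_conjTranspose [CommSemiring R] [StarRing R] [Fintype α]
    [Fintype κ] [DecidableEq κ] (A : Matrix ι α R) (B : Matrix β α R)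
    (M : Matrix (α × κ) (α × κ) R) (s t : κ) :
    blockAt ((A ⊗ₖ (1 : Matrix κ κ R)) * M * (B ⊗ₖ (1 : Matrix κ κ R))ᴴ) s t
      = A * blockAt M s t * Bᴴ := by
  ext
  simp [blockAt, mul_apply, Fintype.sum_prod_type, one_apply, Finset.sum_mul, apply_ite star]

theorem blockAt_one_kronecker_mul_mul_conjTranspose [CommSemiring R] [StarRing R] [Fintype α]
    [Fintype κ] [DecidableEq α] (V W : Matrix ν κ R) (M : Matrix (α × κ) (α × κ) R)
    (s t : ν) :
    blockAt (((1 : Matrix α α R) ⊗ₖ V) * M * ((1 : Matrix α α R) ⊗ₖ W)ᴴ) s t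
      = ∑ s', ∑ t', (V s s' * star (W t t')) • blockAt M s' t' := by
  ext
  simp [blockAt, mul_apply, Fintype.sum_prod_type, one_apply, Finset.sum_mul, Matrix.sum_apply,
    apply_ite star]
  rw [Finset.sum_comm]
  exact Finset.sum_congr rfl fun _ _ => Finset.sum_congr rfl fun _ _ => by ring

end Blocks

section TensId

variable {a b c j k : ℕ}

theorem tensId_apply (Φ : MatC a →ₗ[ℂ] MatC b) (X : Matrix (Fin a × Fin j) (Fin a × Fin j) ℂ)
    (p q : Fin b × Fin j) : tensId Φ j X p q = Φ (blockAt X p.2 q.2) p.1 q.1 :=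
  rfl

theorem blockAt_tensId (Φ : MatC a →ₗ[ℂ] MatC b) (X : Matrix (Fin a × Fin j) (Fin a × Fin j) ℂ)
    (s t : Fin j) : blockAt (tensId Φ j X) s t = Φ (blockAt X s t) :=
  rfl

theorem tensId_sum {ι : Type*} (Φ : MatC a →ₗ[ℂ] MatC b) (u : Finset ι)
    (X : ι → Matrix (Fin a × Fin j) (Fin a × Fin j) ℂ) :
    tensId Φ j (∑ i ∈ u, X i) = ∑ i ∈ u, tensId Φ j (X i) := by
  ext p q
  rw [Matrix.sum_apply, tensId_apply, blockAt_sum, map_sum, Matrix.sum_apply]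
  rfl

theorem tensId_adMap_comp (E : Matrix (Fin c) (Fin b) ℂ) (Ψ : MatC a →ₗ[ℂ] MatC b)
    (X : Matrix (Fin a × Fin j) (Fin a × Fin j) ℂ) :
    tensId (adMap E ∘ₗ Ψ) j X
      = (E ⊗ₖ (1 : MatC j)) * tensId Ψ j X * (E ⊗ₖ (1 : MatC j))ᴴ := by
  ext p q
  exact (congr_fun₂ (blockAt_kronecker_one_mul_mul_conjTranspose E E (tensId Ψ j X) p.2 q.2)
    p.1 q.1).symm

theorem tensId_comp_adMap (Ψ : MatC c →ₗ[ℂ] MatC b) (F : Matrix (Fin c) (Fin a) ℂ)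
    (X : Matrix (Fin a × Fin j) (Fin a × Fin j) ℂ) :
    tensId (Ψ ∘ₗ adMap F) j X
      = tensId Ψ j ((F ⊗ₖ (1 : MatC j)) * X * (F ⊗ₖ (1 : MatC j))ᴴ) := by
  ext p q
  rw [tensId_apply, tensId_apply, blockAt_kronecker_one_mul_mul_conjTranspose]
  rfl

theorem tensId_one_kronecker_mul_mul_conjTranspose (Φ : MatC a →ₗ[ℂ] MatC b)
    (V : Matrix (Fin j) (Fin k) ℂ) (X : Matrix (Fin a × Fin k) (Fin a × Fin k) ℂ) :
    tensId Φ j (((1 : MatC a) ⊗ₖ V) * X * ((1 : MatC a) ⊗ₖ V)ᴴ)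
      = ((1 : MatC b) ⊗ₖ V) * tensId Φ k X * ((1 : MatC b) ⊗ₖ V)ᴴ := by
  ext p q
  have h := congr_fun₂ (blockAt_one_kronecker_mul_mul_conjTranspose V V (tensId Φ k X) p.2 q.2)
    p.1 q.1
  simp only [blockAt_tensId] at h
  simp only [tensId_apply, blockAt_one_kronecker_mul_mul_conjTranspose, map_sum, map_smul]
  exact h.symm

end TensId

section Positivity

variable {a b c j k : ℕ}

theorem isKPositive_iff_forall_vecMulVec (Φ : MatC a →ₗ[ℂ] MatC b) :
    IsKPositive Φ j ↔ ∀ y, (tensId Φ j (vecMulVec y (star y))).PosSemidef := by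
  refine ⟨fun hΦ y => hΦ _ (posSemidef_vecMulVec_self_star y), fun h X hX => ?_⟩
  obtain ⟨r, v, rfl⟩ := posSemidef_iff_eq_sum_vecMulVec.mp hX
  rw [tensId_sum]
  exact posSemidef_sum _ fun i _ => h (v i)

theorem IsKPositive.posSemidef_tensId_vecMulVec_vec {Φ : MatC a →ₗ[ℂ] MatC b}
    (hΦ : IsKPositive Φ k) {Y : Matrix (Fin j) (Fin a) ℂ} (hY : Y.rank ≤ k) :
    (tensId Φ j (vecMulVec (vec Y) (star (vec Y)))).PosSemidef := by
  obtain ⟨V, Z, rfl⟩ := Y.exists_mul_eq_of_rank_le hY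
  rw [vec_mul_eq_mulVec, ← mul_vecMulVec_mul_conjTranspose,
    tensId_one_kronecker_mul_mul_conjTranspose]
  exact (hΦ _ (posSemidef_vecMulVec_self_star _)).mul_mul_conjTranspose_same _

theorem IsKPositive.comp_adMap {Φ : MatC a →ₗ[ℂ] MatC b} (hΦ : IsKPositive Φ k)
    {F : Matrix (Fin a) (Fin c) ℂ} (hF : F.rank ≤ k) (j : ℕ) :
    IsKPositive (Φ ∘ₗ adMap F) j := by
  refine (isKPositive_iff_forall_vecMulVec _).mpr fun y => ?_
  rw [tensId_comp_adMap, mul_vecMulVec_mul_conjTranspose,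
    show y = vec (of fun s i => y (i, s) : Matrix (Fin j) (Fin c) ℂ) from rfl,
    kronecker_one_mulVec_vec]
  exact hΦ.posSemidef_tensId_vecMulVec_vec <|
    (rank_mul_le_right _ _).trans (by rwa [rank_transpose])

theorem IsKPositive.adMap_comp {Ψ : MatC a →ₗ[ℂ] MatC b} (hΨ : IsKPositive Ψ j)
    (E : Matrix (Fin c) (Fin b) ℂ) : IsKPositive (adMap E ∘ₗ Ψ) j := fun X hX => by
  rw [tensId_adMap_comp]
  exact (hΨ X hX).mul_mul_conjTranspose_same _

theorem exists_isHermitian_idempotent_rank_eq_kronecker_one_mulVec {n k : ℕ} (hkn : k ≤ n)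
    (x : Fin n × Fin k → ℂ) :
    ∃ E : MatC n, E.IsHermitian ∧ E * E = E ∧ E.rank = k ∧ (E ⊗ₖ (1 : MatC k)) *ᵥ x = x := by
  let X : Matrix (Fin k) (Fin n) ℂ := of fun s i => x (i, s)
  obtain ⟨E, hEh, hEE, hEr, hEX⟩ :=
    Xᵀ.exists_isHermitian_idempotent_rank_eq_mul_eq (rank_le_width _) (by simpa)
  refine ⟨E, hEh, hEE, hEr, ?_⟩
  change _ *ᵥ vec X = vec X
  rw [kronecker_one_mulVec_vec, ← transpose_transpose (X * Eᵀ), transpose_mul,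
    transpose_transpose, hEX, transpose_transpose]

theorem isKPositive_of_forall_adMap_comp_comp_adMap {m n k : ℕ} {Φ : MatC m →ₗ[ℂ] MatC n}
    (hkm : k ≤ m) (hkn : k ≤ n)
    (h : ∀ E : MatC n, E.IsHermitian → E * E = E → E.rank = k →
      ∀ F : MatC m, F.IsHermitian → F * F = F → F.rank = k →
        IsKPositive (adMap E ∘ₗ Φ ∘ₗ adMap F) k) :
    IsKPositive Φ k := by
  refine (isKPositive_iff_forall_vecMulVec Φ).mpr fun y => ?_
  refine posSemidef_of_forall_dotProduct_mulVec_nonneg fun x => ?_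
  obtain ⟨E, hEh, hEE, hEr, hEx⟩ :=
    exists_isHermitian_idempotent_rank_eq_kronecker_one_mulVec hkn x
  obtain ⟨F, hFh, hFF, hFr, hFy⟩ :=
    exists_isHermitian_idempotent_rank_eq_kronecker_one_mulVec hkm y
  have hEx' : (E ⊗ₖ (1 : MatC k))ᴴ *ᵥ x = x := by
    rwa [conjTranspose_kronecker, hEh.eq, conjTranspose_one]
  have hxy := (h E hEh hEE hEr F hFh hFF hFr _
    (posSemidef_vecMulVec_self_star y)).dotProduct_mulVec_nonneg x
  rwa [tensId_adMap_comp, tensId_comp_adMap, mul_vecMulVec_mul_conjTranspose, hFy,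
    star_dotProduct_mul_mul_conjTranspose_mulVec, hEx'] at hxy

end Positivity

theorem stmt15_general {m n k : ℕ} (hkm : k ≤ m) (hkn : k ≤ n) (Φ : MatC m →ₗ[ℂ] MatC n) :
    IsKPositive Φ k ↔
      ∀ E : MatC n, E.IsHermitian → E * E = E → E.rank = k →
        ∀ F : MatC m, F.IsHermitian → F * F = F → F.rank = k →
          IsCompletelyPositive (adMap E ∘ₗ Φ ∘ₗ adMap F) :=
  ⟨fun hΦ E _ _ _ _ _ _ hF j => (hΦ.comp_adMap hF.le j).adMap_comp E,
    fun h => isKPositive_of_forall_adMap_comp_comp_adMap hkm hkn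
      fun E hE hEE hEr F hF hFF hFr => h E hE hEE hEr F hF hFF hFr k⟩

/-- `Φ` is `k`-positive iff `Ad_E∘Φ∘Ad_F` is CP for all rank-`k` orthogonal
projections `E` on `H` and `F` on `K`. -/
theorem stmt15 {m n k : ℕ} (hkm : k ≤ m) (hkn : k ≤ n) (Φ : MatC m →ₗ[ℂ] MatC n)
    (hΦ : HermPreserving Φ) :
    IsKPositive Φ k ↔
      ∀ E : MatC n, E.IsHermitian → E * E = E → E.rank = k →
        ∀ F : MatC m, F.IsHermitian → F * F = F → F.rank = k →
          IsCompletelyPositive (adMap E ∘ₗ Φ ∘ₗ adMap F) :=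
  stmt15_general hkm hkn Φ
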